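/- arXiv:1906.01809 — 6 statements merged into one kernel-verified Lean document; each statement's English description precedes it below -/
import Mathlib

section
/- For every dimension d ≥ 1, all vectors ξ, η ∈ ℝ^d, and every choice of signs ι₁, ι₂ ∈ {+1, −1}, the Klein–Gordon modulation function Φ(ξ,η) = −⟨ξ⟩ + ι₁⟨ξ−η⟩ + ι₂⟨η⟩ satisfies the lower bound |Φ(ξ,η)| ≥ 1 / (2 ⟨min(|ξ−η|, |η|)⟩). -/
private lemma jb_pos (x : ℝ) : 0 < Real.sqrt (1 + x ^ 2) :=
  Real.sqrt_pos.2 (by positivity)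

private lemma jb_one_le (x : ℝ) : 1 ≤ Real.sqrt (1 + x ^ 2) := by
  have h := Real.sq_sqrt (show (0:ℝ) ≤ 1 + x ^ 2 by positivity)
  nlinarith [Real.sqrt_nonneg (1 + x ^ 2), sq_nonneg x]

private lemma jb_self_le (x : ℝ) (hx : 0 ≤ x) : x ≤ Real.sqrt (1 + x ^ 2) := by
  have h := Real.sq_sqrt (show (0:ℝ) ≤ 1 + x ^ 2 by positivity)
  nlinarith [Real.sqrt_nonneg (1 + x ^ 2)]

private lemma jb_mono {x y : ℝ} (hx : 0 ≤ x) (hxy : x ≤ y) :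
    Real.sqrt (1 + x ^ 2) ≤ Real.sqrt (1 + y ^ 2) :=
  Real.sqrt_le_sqrt (by nlinarith)

private lemma jb_sub (x : ℝ) (hx : 0 ≤ x) :
    Real.sqrt (1 + x ^ 2) - x = 1 / (Real.sqrt (1 + x ^ 2) + x) := by
  have h := Real.sq_sqrt (show (0:ℝ) ≤ 1 + x ^ 2 by positivity)
  have hp : 0 < Real.sqrt (1 + x ^ 2) + x := by
    have := jb_pos x; linarith
  field_simp
  nlinarith

private lemma key (x y : ℝ) (hx : 0 ≤ x) (hy : 0 ≤ y) :
    1 / (2 * Real.sqrt (1 + x ^ 2)) ≤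
      Real.sqrt (1 + x ^ 2) + Real.sqrt (1 + y ^ 2) - Real.sqrt (1 + (x + y) ^ 2) := by
  have hxy : 0 ≤ x + y := by linarith
  have e1 := jb_sub x hx
  have e2 := jb_sub y hy
  have e3 := jb_sub (x + y) hxy
  have hjx := jb_pos x
  have hjy := jb_pos y
  have hjs := jb_pos (x + y)
  have hys : Real.sqrt (1 + y ^ 2) ≤ Real.sqrt (1 + (x + y) ^ 2) :=
    jb_mono hy (by linarith)
  have hpy : 0 < Real.sqrt (1 + y ^ 2) + y := by linarith
  have hps : 0 < Real.sqrt (1 + (x + y) ^ 2) + (x + y) := by linarith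
  have h2 : 1 / (Real.sqrt (1 + (x + y) ^ 2) + (x + y)) ≤
      1 / (Real.sqrt (1 + y ^ 2) + y) :=
    one_div_le_one_div_of_le hpy (by linarith)
  have hx1 : x ≤ Real.sqrt (1 + x ^ 2) := jb_self_le x hx
  have hpx : 0 < Real.sqrt (1 + x ^ 2) + x := by linarith
  have h3 : 1 / (2 * Real.sqrt (1 + x ^ 2)) ≤ 1 / (Real.sqrt (1 + x ^ 2) + x) :=
    one_div_le_one_div_of_le hpx (by linarith)
  have eq : Real.sqrt (1 + x ^ 2) + Real.sqrt (1 + y ^ 2) - Real.sqrt (1 + (x + y) ^ 2)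
      = (Real.sqrt (1 + x ^ 2) - x) + ((Real.sqrt (1 + y ^ 2) - y)
        - (Real.sqrt (1 + (x + y) ^ 2) - (x + y))) := by ring
  rw [eq, e1, e2, e3]
  linarith

private lemma aux (a b c : ℝ) (ha : 0 ≤ a) (hb : 0 ≤ b) (hc : 0 ≤ c)
    (t1 : a ≤ b + c) (t2 : b ≤ a + c) (t3 : c ≤ a + b)
    (ι₁ ι₂ : ℝ) (h1 : ι₁ = 1 ∨ ι₁ = -1) (h2 : ι₂ = 1 ∨ ι₂ = -1) :
    1 / (2 * Real.sqrt (1 + (min b c) ^ 2)) ≤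
      |(-Real.sqrt (1 + a ^ 2) + ι₁ * Real.sqrt (1 + b ^ 2)
        + ι₂ * Real.sqrt (1 + c ^ 2))| := by
  have hminb : min b c ≤ b := min_le_left b c
  have hminc : min b c ≤ c := min_le_right b c
  have hmin0 : 0 ≤ min b c := le_min hb hc
  have hjmin := jb_pos (min b c)
  have hmono_b : Real.sqrt (1 + (min b c) ^ 2) ≤ Real.sqrt (1 + b ^ 2) :=
    jb_mono hmin0 hminb
  have hmono_c : Real.sqrt (1 + (min b c) ^ 2) ≤ Real.sqrt (1 + c ^ 2) :=
    jb_mono hmin0 hminc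
  have hdb : 1 / (2 * Real.sqrt (1 + b ^ 2)) ≤ 1 / (2 * Real.sqrt (1 + (min b c) ^ 2)) :=
    one_div_le_one_div_of_le (by linarith) (by linarith)
  have hdc : 1 / (2 * Real.sqrt (1 + c ^ 2)) ≤ 1 / (2 * Real.sqrt (1 + (min b c) ^ 2)) :=
    one_div_le_one_div_of_le (by linarith) (by linarith)
  rcases h1 with rfl | rfl <;> rcases h2 with rfl | rfl
  · -- ι₁ = 1, ι₂ = 1 : Φ = jb + jc - ja ≥ key
    have hja : Real.sqrt (1 + a ^ 2) ≤ Real.sqrt (1 + (b + c) ^ 2) := jb_mono ha t1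
    rcases le_total b c with hbc | hbc
    · have hk := key b c hb hc
      have hmin : min b c = b := min_eq_left hbc
      rw [hmin]
      calc 1 / (2 * Real.sqrt (1 + b ^ 2))
          ≤ -Real.sqrt (1 + a ^ 2) + 1 * Real.sqrt (1 + b ^ 2)
            + 1 * Real.sqrt (1 + c ^ 2) := by linarith
        _ ≤ _ := le_abs_self _
    · have hk := key c b hc hb
      have hmin : min b c = c := min_eq_right hbc
      rw [hmin]
      have : Real.sqrt (1 + (c + b) ^ 2) = Real.sqrt (1 + (b + c) ^ 2) := by ring_nf
      calc 1 / (2 * Real.sqrt (1 + c ^ 2))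
          ≤ -Real.sqrt (1 + a ^ 2) + 1 * Real.sqrt (1 + b ^ 2)
            + 1 * Real.sqrt (1 + c ^ 2) := by rw [this] at hk; linarith
        _ ≤ _ := le_abs_self _
  · -- ι₁ = 1, ι₂ = -1 : -Φ = ja + jc - jb
    have hjb : Real.sqrt (1 + b ^ 2) ≤ Real.sqrt (1 + (c + a) ^ 2) :=
      jb_mono hb (by linarith)
    have hk := key c a hc ha
    have hja1 := jb_one_le a
    rcases le_total b c with hbc | hbc
    · -- min = b : use ja ≥ 1 and jc ≥ jb
      have hmin : min b c = b := min_eq_left hbc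
      have hjbc : Real.sqrt (1 + b ^ 2) ≤ Real.sqrt (1 + c ^ 2) := jb_mono hb hbc
      have hjb1 := jb_one_le b
      have hhalf : 1 / (2 * Real.sqrt (1 + b ^ 2)) ≤ 1 / 2 := by
        apply one_div_le_one_div_of_le <;> linarith
      rw [hmin]
      calc 1 / (2 * Real.sqrt (1 + b ^ 2))
          ≤ -(-Real.sqrt (1 + a ^ 2) + 1 * Real.sqrt (1 + b ^ 2)
              + (-1) * Real.sqrt (1 + c ^ 2)) := by linarith
        _ ≤ _ := neg_le_abs _
    · have hmin : min b c = c := min_eq_right hbc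
      rw [hmin]
      calc 1 / (2 * Real.sqrt (1 + c ^ 2))
          ≤ -(-Real.sqrt (1 + a ^ 2) + 1 * Real.sqrt (1 + b ^ 2)
              + (-1) * Real.sqrt (1 + c ^ 2)) := by linarith
        _ ≤ _ := neg_le_abs _
  · -- ι₁ = -1, ι₂ = 1 : -Φ = ja + jb - jc
    have hjc : Real.sqrt (1 + c ^ 2) ≤ Real.sqrt (1 + (b + a) ^ 2) :=
      jb_mono hc (by linarith)
    have hk := key b a hb ha
    have hja1 := jb_one_le a
    rcases le_total b c with hbc | hbc
    · have hmin : min b c = b := min_eq_left hbc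
      rw [hmin]
      calc 1 / (2 * Real.sqrt (1 + b ^ 2))
          ≤ -(-Real.sqrt (1 + a ^ 2) + (-1) * Real.sqrt (1 + b ^ 2)
              + 1 * Real.sqrt (1 + c ^ 2)) := by linarith
        _ ≤ _ := neg_le_abs _
    · -- min = c : use ja ≥ 1 and jb ≥ jc
      have hmin : min b c = c := min_eq_right hbc
      have hjcb : Real.sqrt (1 + c ^ 2) ≤ Real.sqrt (1 + b ^ 2) := jb_mono hc hbc
      have hjc1 := jb_one_le c
      have hhalf : 1 / (2 * Real.sqrt (1 + c ^ 2)) ≤ 1 / 2 := by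
        apply one_div_le_one_div_of_le <;> linarith
      rw [hmin]
      calc 1 / (2 * Real.sqrt (1 + c ^ 2))
          ≤ -(-Real.sqrt (1 + a ^ 2) + (-1) * Real.sqrt (1 + b ^ 2)
              + 1 * Real.sqrt (1 + c ^ 2)) := by linarith
        _ ≤ _ := neg_le_abs _
  · -- ι₁ = -1, ι₂ = -1 : -Φ = ja + jb + jc ≥ 3
    have h1 := jb_one_le a
    have h2 := jb_one_le b
    have h3 := jb_one_le c
    have hmm := jb_one_le (min b c)
    have : 1 / (2 * Real.sqrt (1 + (min b c) ^ 2)) ≤ 1 / 2 := by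
      apply one_div_le_one_div_of_le <;> linarith
    calc 1 / (2 * Real.sqrt (1 + (min b c) ^ 2))
        ≤ -(-Real.sqrt (1 + a ^ 2) + (-1) * Real.sqrt (1 + b ^ 2)
            + (-1) * Real.sqrt (1 + c ^ 2)) := by linarith
      _ ≤ _ := neg_le_abs _

/-- For every dimension `d ≥ 1`, all `ξ, η ∈ ℝ^d`, and signs `ι₁, ι₂ ∈ {1, -1}`,
the Klein–Gordon modulation `Φ(ξ,η) = -⟨ξ⟩ + ι₁⟨ξ-η⟩ + ι₂⟨η⟩` satisfies
`|Φ(ξ,η)| ≥ 1 / (2⟨min(|ξ-η|,|η|)⟩)`, where `⟨a⟩ = √(1+|a|²)`. -/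
theorem modulation_lower_bound (d : ℕ) (hd : 1 ≤ d)
    (ξ η : EuclideanSpace ℝ (Fin d)) (ι₁ ι₂ : ℝ)
    (h1 : ι₁ = 1 ∨ ι₁ = -1) (h2 : ι₂ = 1 ∨ ι₂ = -1) :
    1 / (2 * Real.sqrt (1 + (min ‖ξ - η‖ ‖η‖) ^ 2)) ≤
      |(-Real.sqrt (1 + ‖ξ‖ ^ 2) + ι₁ * Real.sqrt (1 + ‖ξ - η‖ ^ 2)
        + ι₂ * Real.sqrt (1 + ‖η‖ ^ 2))| := by
  refine aux ‖ξ‖ ‖ξ - η‖ ‖η‖ (norm_nonneg _) (norm_nonneg _) (norm_nonneg _) ?_ ?_ ?_ ι₁ ι₂ h1 h2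
  · simpa using norm_add_le (ξ - η) η
  · exact norm_sub_le ξ η
  · simpa using norm_sub_le ξ (ξ - η)
end

section
/- Let t₀ ∈ ℝ. There is no function y : ℝ → ℝ that is twice differentiable at every t ≥ t₀ and satisfies simultaneously: y(t) > 0 for all t ≥ t₀, y'(t₀) > 0, and y(t)·y''(t) ≥ (5/4)·(y'(t))² for all t ≥ t₀. -/
/-!
Put `z = y ^ (-1/4)`. Then `z'' = (1/4) y^(-9/4) ((5/4) y'^2 - y y'')`, so the differential
inequality says exactly that `z` is concave on `[t₀, ∞)`, while `y'(t₀) > 0` makes `z'(t₀) < 0`.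
A concave function lies below its tangent line at `t₀`, which has negative slope, so `z` would
eventually become negative, contradicting `z = y ^ (-1/4) > 0`.
-/

open Set

lemma ConcaveOn.not_bddBelow_image_Ici_of_hasDerivAt_neg {f : ℝ → ℝ} {a f' : ℝ}
    (hf : ConcaveOn ℝ (Ici a) f) (hderiv : HasDerivAt f f' a) (hneg : f' < 0) :
    ¬ BddBelow (f '' Ici a) := by
  rintro ⟨m, hm⟩
  -- the tangent line at `a` drops to `m - 1` at `t`
  set t := a + (f a - m + 1) / -f'
  have hat : a < t := lt_add_of_pos_right a (div_pos (by linarith [hm ⟨a, self_mem_Ici, rfl⟩])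
    (neg_pos.mpr hneg))
  have hslope : slope f a t ≤ f' := hf.slope_le_of_hasDerivAt self_mem_Ici hat.le hat hderiv
  rw [slope_def_field, div_le_iff₀ (sub_pos.mpr hat)] at hslope
  have hdrop : f' * (t - a) = -(f a - m + 1) := by
    simp only [t, add_sub_cancel_left]
    field_simp [hneg.ne]
  linarith [hm ⟨t, hat.le, rfl⟩]

lemma HasDerivAt.const_mul_rpow_sub_one_mul {y y' : ℝ → ℝ} {t y'' p : ℝ}
    (hy : HasDerivAt y (y' t) t) (hy' : HasDerivAt y' y'' t) (hpos : 0 < y t) :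
    HasDerivAt (fun s ↦ p * y s ^ (p - 1) * y' s)
      (p * y t ^ (p - 2) * ((p - 1) * y' t ^ 2 + y t * y'')) t := by
  have hpow := hy.rpow_const (p := p - 1) (Or.inl hpos.ne')
  refine ((hpow.const_mul p).mul hy').congr_deriv ?_
  have hsplit : y t ^ (p - 1) = y t ^ (p - 2) * y t := by
    rw [← Real.rpow_add_one hpos.ne']
    ring_nf
  rw [hsplit, show p - 1 - 1 = p - 2 by ring]
  ring

lemma concaveOn_rpow_of_mul_deriv_deriv_ge {D : Set ℝ} (hD : Convex ℝ D) {y : ℝ → ℝ} {p : ℝ}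
    (hp : p < 0) (hdiff : ∀ t ∈ D, DifferentiableAt ℝ y t ∧ DifferentiableAt ℝ (deriv y) t)
    (hpos : ∀ t ∈ D, 0 < y t)
    (hineq : ∀ t ∈ D, (1 - p) * deriv y t ^ 2 ≤ y t * deriv (deriv y) t) :
    ConcaveOn ℝ D (fun t ↦ y t ^ p) := by
  have hfirst : ∀ t ∈ D, HasDerivAt (fun s ↦ y s ^ p) (p * y t ^ (p - 1) * deriv y t) t :=
    fun t ht ↦ ((hdiff t ht).1.hasDerivAt.rpow_const (Or.inl (hpos t ht).ne')).congr_deriv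
      (by ring)
  refine concaveOn_of_hasDerivWithinAt2_nonpos hD
    (fun t ht ↦ (hfirst t ht).continuousAt.continuousWithinAt)
    (fun t ht ↦ (hfirst t (interior_subset ht)).hasDerivWithinAt)
    (fun t ht ↦ ((hdiff t (interior_subset ht)).1.hasDerivAt.const_mul_rpow_sub_one_mul
      (hdiff t (interior_subset ht)).2.hasDerivAt (hpos t (interior_subset ht))).hasDerivWithinAt)
    (fun t ht ↦ ?_)
  have ht := interior_subset ht
  refine mul_nonpos_of_nonpos_of_nonneg
    (mul_nonpos_of_nonpos_of_nonneg hp.le (Real.rpow_pos_of_pos (hpos t ht) _).le) ?_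
  linarith [hineq t ht]

/-- There is no function `y : ℝ → ℝ`, twice differentiable at each `t ≥ t₀`, with
`y > 0` on `[t₀,∞)`, `y'(t₀) > 0`, and `y·y'' ≥ (5/4)·(y')²` on `[t₀,∞)`. -/
theorem no_global_convex_blowup (t₀ : ℝ) :
    ¬ ∃ y : ℝ → ℝ,
      (∀ t, t₀ ≤ t → DifferentiableAt ℝ y t ∧ DifferentiableAt ℝ (deriv y) t) ∧
      (∀ t, t₀ ≤ t → 0 < y t) ∧
      0 < deriv y t₀ ∧
      (∀ t, t₀ ≤ t → (5 / 4) * (deriv y t) ^ 2 ≤ y t * deriv (deriv y) t) := by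
  rintro ⟨y, hdiff, hpos, hy'₀, hineq⟩
  have hconcave : ConcaveOn ℝ (Ici t₀) (fun t ↦ y t ^ (-1 / 4 : ℝ)) :=
    concaveOn_rpow_of_mul_deriv_deriv_ge (convex_Ici t₀) (by norm_num) hdiff hpos
      (fun t ht ↦ by norm_num [hineq t ht])
  have hslope : HasDerivAt (fun t ↦ y t ^ (-1 / 4 : ℝ))
      (deriv y t₀ * (-1 / 4) * y t₀ ^ ((-1 / 4 : ℝ) - 1)) t₀ :=
    (hdiff t₀ le_rfl).1.hasDerivAt.rpow_const (Or.inl (hpos t₀ le_rfl).ne')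
  have hslope_neg : deriv y t₀ * (-1 / 4) * y t₀ ^ ((-1 / 4 : ℝ) - 1) < 0 :=
    mul_neg_of_neg_of_pos (mul_neg_of_pos_of_neg hy'₀ (by norm_num))
      (Real.rpow_pos_of_pos (hpos t₀ le_rfl) _)
  refine hconcave.not_bddBelow_image_Ici_of_hasDerivAt_neg hslope hslope_neg ⟨0, ?_⟩
  rintro _ ⟨t, ht, rfl⟩
  exact (Real.rpow_pos_of_pos (hpos t ht) _).le
end

section
/- Let a, b ∈ ℝ with 0 < a < b, and define g(λ) = (1/2)·a·e^{2λ} − (1/3)·b·e^{3λ} for λ ∈ ℝ. Then λ* := log(a/b) satisfies λ* < 0 and g'(λ*) = 0; moreover g''(λ) ≤ 2·g'(λ) for every λ ∈ ℝ, and consequently g'(0) ≤ 2·(g(0) − g(λ*)). -/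
/-! `g' - 2 g` is nonincreasing because `g'' ≤ 2 g'`; evaluating it at `λ* ≤ 0`, where `g'` vanishes,
and at `0` gives `g'(0) - 2 g(0) ≤ -2 g(λ*)`. -/

open Real

theorem sub_deriv_le_mul_sub_of_deriv_deriv_le {g : ℝ → ℝ} {c x y : ℝ} (hg : Differentiable ℝ g)
    (hg' : Differentiable ℝ (deriv g)) (h : ∀ t, deriv (deriv g) t ≤ c * deriv g t) (hxy : x ≤ y) :
    deriv g y - deriv g x ≤ c * (g y - g x) := by
  have hanti : Antitone fun t => deriv g t - c * g t := by
    refine antitone_of_deriv_nonpos (hg'.sub (hg.const_mul c)) fun t => ?_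
    exact ((hg' t).hasDerivAt.sub ((hg t).hasDerivAt.const_mul c)).deriv.trans_le
      (by linarith [h t])
  linarith [hanti hxy]

/-- The scaling function `λ ↦ J(e^λ φ)`, with `a = ‖φ‖²_{H¹}` and `b = ∫ φ³`. -/
noncomputable def scalingFun (a b : ℝ) (lam : ℝ) : ℝ :=
  1 / 2 * a * exp (2 * lam) - 1 / 3 * b * exp (3 * lam)

theorem hasDerivAt_exp_const_mul (c x : ℝ) :
    HasDerivAt (fun t => exp (c * t)) (c * exp (c * x)) x := by
  simpa [mul_comm] using ((hasDerivAt_id x).const_mul c).exp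

theorem hasDerivAt_scalingFun (a b x : ℝ) :
    HasDerivAt (scalingFun a b) (a * exp (2 * x) - b * exp (3 * x)) x := by
  refine (((hasDerivAt_exp_const_mul 2 x).const_mul (1 / 2 * a)).sub
    ((hasDerivAt_exp_const_mul 3 x).const_mul (1 / 3 * b))).congr_deriv ?_
  ring

theorem deriv_scalingFun (a b : ℝ) :
    deriv (scalingFun a b) = fun x => a * exp (2 * x) - b * exp (3 * x) :=
  funext fun x => (hasDerivAt_scalingFun a b x).deriv

theorem hasDerivAt_deriv_scalingFun (a b x : ℝ) :
    HasDerivAt (deriv (scalingFun a b)) (2 * a * exp (2 * x) - 3 * b * exp (3 * x)) x := by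
  rw [deriv_scalingFun]
  refine (((hasDerivAt_exp_const_mul 2 x).const_mul a).sub
    ((hasDerivAt_exp_const_mul 3 x).const_mul b)).congr_deriv ?_
  ring

theorem deriv_deriv_scalingFun_le {a b : ℝ} (hb : 0 ≤ b) (x : ℝ) :
    deriv (deriv (scalingFun a b)) x ≤ 2 * deriv (scalingFun a b) x := by
  rw [(hasDerivAt_deriv_scalingFun a b x).deriv, deriv_scalingFun]
  linarith [mul_nonneg hb (exp_pos (3 * x)).le]

theorem deriv_scalingFun_log_div {a b : ℝ} (hab : 0 < a / b) :
    deriv (scalingFun a b) (log (a / b)) = 0 := by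
  have hb : b ≠ 0 := by rintro rfl; simp at hab
  have hexp : exp (3 * log (a / b)) = exp (2 * log (a / b)) * (a / b) := by
    rw [show 3 * log (a / b) = 2 * log (a / b) + log (a / b) by ring, exp_add, exp_log hab]
  rw [deriv_scalingFun]
  dsimp only
  rw [hexp]
  field_simp
  ring

/-- For `0 < a < b` and `g(λ) = (1/2)a e^{2λ} - (1/3)b e^{3λ}`, the point `λ* = log(a/b)`
is negative and a critical point of `g`; moreover `g'' ≤ 2g'` everywhere, and consequently
`g'(0) ≤ 2(g(0) - g(λ*))`. -/
theorem variational_scaling_estimate (a b : ℝ) (ha : 0 < a) (hab : a < b)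
    (g : ℝ → ℝ)
    (hg : g = fun lam => 1 / 2 * a * Real.exp (2 * lam) - 1 / 3 * b * Real.exp (3 * lam)) :
    Real.log (a / b) < 0 ∧
    deriv g (Real.log (a / b)) = 0 ∧
    (∀ lam : ℝ, deriv (deriv g) lam ≤ 2 * deriv g lam) ∧
    deriv g 0 ≤ 2 * (g 0 - g (Real.log (a / b))) := by
  have hb : 0 < b := ha.trans hab
  obtain rfl : g = scalingFun a b := hg
  have hlog : log (a / b) < 0 := log_neg (div_pos ha hb) ((div_lt_one hb).2 hab)
  have hcrit := deriv_scalingFun_log_div (div_pos ha hb)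
  have hconv := deriv_deriv_scalingFun_le (a := a) hb.le
  refine ⟨hlog, hcrit, hconv, ?_⟩
  have hmono := sub_deriv_le_mul_sub_of_deriv_deriv_le
    (fun x => (hasDerivAt_scalingFun a b x).differentiableAt)
    (fun x => (hasDerivAt_deriv_scalingFun a b x).differentiableAt) hconv hlog.le
  rwa [hcrit, sub_zero] at hmono
end

section
/- Let f : ℝ → ℝ be continuously differentiable with compact support, and define the radial function u : ℝ⁴ → ℝ by u(x) = f(|x|). Then for every x ∈ ℝ⁴, |x|³·u(x)² ≤ (1/π²)·(∫_{ℝ⁴} u² dy)^{1/2}·(∫_{ℝ⁴} |∇u(y)|² dy)^{1/2}. -/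
/-!
In polar coordinates `∫_{ℝ⁴} g(|y|) dy = 2π² ∫₀^∞ s³ g(s) ds`. Since `(s³ f²)' ≥ 2 s³ f f'` on
`[0, ∞)` and `f` vanishes far out, integrating from `r` gives
`r³ f(r)² ≤ 2 ∫₀^∞ s³ |f| |f'| = π⁻² ∫_{ℝ⁴} |u| |∇u|`, because `|∇u(y)| = |f'(|y|)|` for `y ≠ 0`.
Cauchy–Schwarz in `L²(ℝ⁴)` finishes the proof.
-/

open MeasureTheory Set

theorem HasCompactSupport.comp_norm {E F : Type*} [NormedAddCommGroup E] [ProperSpace E] [Zero F]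
    {g : ℝ → F} (hg : HasCompactSupport g) : HasCompactSupport fun x : E => g ‖x‖ := by
  obtain ⟨R, hR⟩ := hg.isBounded.subset_closedBall 0
  refine .of_support_subset_isCompact (isCompact_closedBall (0 : E) R) fun x hx => ?_
  simpa using hR (subset_tsupport g hx)

theorem norm_fderiv_comp_norm {E : Type*} [NormedAddCommGroup E] [InnerProductSpace ℝ E]
    {f : ℝ → ℝ} {x : E} (hf : DifferentiableAt ℝ f ‖x‖) (hx : x ≠ 0) :
    ‖fderiv ℝ (fun y : E => f ‖y‖) x‖ = |deriv f ‖x‖| := by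
  have : Nontrivial E := nontrivial_of_ne x 0 hx
  have hnorm : DifferentiableAt ℝ (‖·‖) x := (contDiffAt_norm ℝ hx).differentiableAt one_ne_zero
  have hcomp : HasFDerivAt (fun y : E => f ‖y‖) (deriv f ‖x‖ • fderiv ℝ (‖·‖) x) x :=
    hf.hasDerivAt.comp_hasFDerivAt x hnorm.hasFDerivAt
  rw [hcomp.fderiv, norm_smul, norm_fderiv_norm hnorm, mul_one, Real.norm_eq_abs]

theorem integral_fun_norm_of_finrank_eq_four {E : Type*} [NormedAddCommGroup E]
    [InnerProductSpace ℝ E] [FiniteDimensional ℝ E] [MeasurableSpace E] [BorelSpace E]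
    (hE : Module.finrank ℝ E = 4) (g : ℝ → ℝ) :
    ∫ x : E, g ‖x‖ = 2 * Real.pi ^ 2 * ∫ s in Ioi 0, s ^ 3 * g s := by
  have : Nontrivial E := Module.nontrivial_of_finrank_pos (R := ℝ) (by rw [hE]; norm_num)
  have hball : volume.real (Metric.ball (0 : E) 1) = Real.pi ^ 2 / 2 := by
    rw [measureReal_def, InnerProductSpace.volume_ball_of_dim_even (k := 2) (by omega)]
    norm_num [Nat.factorial]
    positivity
  rw [integral_fun_norm_addHaar, hball, hE, nsmul_eq_mul, smul_eq_mul]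
  norm_num
  ring

theorem integral_abs_mul_abs_le_sqrt_mul_sqrt {α : Type*} [MeasurableSpace α] {μ : Measure α}
    {g h : α → ℝ} (hg : MemLp g 2 μ) (hh : MemLp h 2 μ) :
    ∫ a, |g a| * |h a| ∂μ ≤ √(∫ a, g a ^ 2 ∂μ) * √(∫ a, h a ^ 2 ∂μ) := by
  have := integral_mul_norm_le_Lp_mul_Lq (μ := μ) Real.HolderConjugate.two_two
    (by simpa using hg) (by simpa using hh)
  simpa [Real.sqrt_eq_rpow, Real.rpow_two] using this

theorem pow_mul_sq_le_two_mul_integral_Ioi {f : ℝ → ℝ} (hf : ContDiff ℝ 1 f)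
    (hfsupp : HasCompactSupport f) (k : ℕ) {r : ℝ} (hr : 0 ≤ r) :
    r ^ k * f r ^ 2 ≤ 2 * ∫ s in Ioi 0, s ^ k * (|f s| * |deriv f s|) := by
  obtain ⟨M, hM⟩ := hfsupp.isCompact.bddAbove
  set R := max r (M + 1)
  have hrR : r ≤ R := le_max_left _ _
  have hfR : f R = 0 :=
    image_eq_zero_of_notMem_tsupport fun hR => by linarith [hM hR, le_max_right r (M + 1)]
  have hfc := hf.continuous
  have hf'c := hf.continuous_deriv_one
  set φ : ℝ → ℝ := fun s => 2 * (s ^ k * (|f s| * |deriv f s|))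
  have hφint : Integrable φ := by
    refine (by fun_prop : Continuous φ).integrable_of_hasCompactSupport
      (hfsupp.mono fun s hs => ?_)
    contrapose! hs
    simp [φ, Function.notMem_support.mp hs]
  have hderiv_le : ∀ s ∈ Ioo r R,
      -(k * s ^ (k - 1) * f s ^ 2 + s ^ k * (2 * f s * deriv f s)) ≤ φ s := by
    intro s hs
    have hs0 : 0 ≤ s := hr.trans hs.1.le
    have : -(f s * deriv f s) ≤ |f s| * |deriv f s| := abs_mul (f s) (deriv f s) ▸ neg_le_abs _
    have : 0 ≤ k * s ^ (k - 1) * f s ^ 2 := by positivity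
    nlinarith [pow_nonneg hs0 k]
  have hFTC := intervalIntegral.sub_le_integral_of_hasDeriv_right_of_le hrR
    (by fun_prop : Continuous fun s => -(s ^ k * f s ^ 2)).continuousOn
    (fun s _ => (((hasDerivAt_pow k s).mul
      ((hf.differentiable one_ne_zero s).hasDerivAt.pow 2)).neg).hasDerivWithinAt)
    hφint.integrableOn fun s hs => by simpa using hderiv_le s hs
  calc r ^ k * f r ^ 2 ≤ ∫ s in r..R, φ s := by simpa [hfR] using hFTC
    _ ≤ ∫ s in Ioi 0, φ s := by
      rw [intervalIntegral.integral_of_le hrR]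
      refine setIntegral_mono_set hφint.integrableOn ?_ ?_
      · filter_upwards [ae_restrict_mem measurableSet_Ioi] with s (hs : 0 < s)
        positivity
      · exact (Ioc_subset_Ioi_self.trans (Ioi_subset_Ioi hr)).eventuallyLE
    _ = 2 * ∫ s in Ioi 0, s ^ k * (|f s| * |deriv f s|) := integral_const_mul _ _

/-- Radial Sobolev (Strauss) inequality in dimension 4: if `u(x) = f(|x|)` with `f` a `C¹`
compactly supported function, then for every `x`,
`|x|³ u(x)² ≤ (1/π²) ‖u‖_{L²} ‖∇u‖_{L²}`. -/
theorem radial_sobolev_4d (f : ℝ → ℝ) (hf : ContDiff ℝ 1 f)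
    (hfsupp : HasCompactSupport f)
    (u : EuclideanSpace ℝ (Fin 4) → ℝ) (hu : u = fun x => f ‖x‖) :
    ∀ x : EuclideanSpace ℝ (Fin 4),
      ‖x‖ ^ 3 * u x ^ 2 ≤
        1 / Real.pi ^ 2 * Real.sqrt (∫ y, u y ^ 2) *
          Real.sqrt (∫ y, ‖fderiv ℝ u y‖ ^ 2) := by
  intro x
  -- `u` need not be differentiable at the origin
  have hDu : (fun y => ‖fderiv ℝ u y‖) =ᵐ[volume] fun y => |deriv f ‖y‖| :=
    (Measure.ae_ne volume 0).mono fun y hy => by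
      rw [hu]; exact norm_fderiv_comp_norm (hf.differentiable one_ne_zero _) hy
  have hu_memLp : MemLp u 2 volume := by
    rw [hu]
    exact (hf.continuous.comp continuous_norm).memLp_of_hasCompactSupport hfsupp.comp_norm
  have hDu_memLp : MemLp (fun y => ‖fderiv ℝ u y‖) 2 volume := by
    refine MemLp.ae_eq hDu.symm ?_
    exact (hf.continuous_deriv_one.comp continuous_norm).abs.memLp_of_hasCompactSupport
      hfsupp.deriv.comp_norm.abs
  have hprod : ∫ y, |u y| * |‖fderiv ℝ u y‖| = ∫ y, |f ‖y‖| * |deriv f ‖y‖| :=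
    integral_congr_ae (hDu.mono fun y hy => by dsimp only at hy ⊢; rw [abs_norm, hy, hu])
  calc ‖x‖ ^ 3 * u x ^ 2 ≤ 2 * ∫ s in Ioi 0, s ^ 3 * (|f s| * |deriv f s|) := by
        rw [hu]; exact pow_mul_sq_le_two_mul_integral_Ioi hf hfsupp 3 (norm_nonneg x)
    _ = 1 / Real.pi ^ 2 * ∫ y, |u y| * |‖fderiv ℝ u y‖| := by
        rw [hprod, integral_fun_norm_of_finrank_eq_four finrank_euclideanSpace_fin
          fun s => |f s| * |deriv f s|]
        field_simp
    _ ≤ 1 / Real.pi ^ 2 * (√(∫ y, u y ^ 2) * √(∫ y, ‖fderiv ℝ u y‖ ^ 2)) := by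
        gcongr
        exact integral_abs_mul_abs_le_sqrt_mul_sqrt hu_memLp hDu_memLp
    _ = _ := (mul_assoc _ _ _).symm
end

section
/- Let h : ℝ → ℝ be measurable and nonnegative, let t ∈ ℝ and τ > 0. Then ∫_{t−τ}^{t} (t−s)^{−2/3}·h(s)^{1/3} ds ≤ 4^{8/9}·τ^{2/9}·( ∫_{t−τ}^{t} h(s)³ ds )^{1/9}. -/
/-!
Hölder's inequality with exponents `9/8` and `9` splits the integrand into the singular kernel
`(t - s)^(-2/3)` and `h^(1/3)`. The kernel lands in `L^(9/8)` because `(2/3)(9/8) = 3/4 < 1`, and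
`∫_{t-τ}^t (t - s)^(-3/4) ds = 4 τ^(1/4)`, whose `8/9`-th power is `4^(8/9) τ^(2/9)`.
-/

open MeasureTheory Set

theorem ENNReal.ofReal_rpow_rpow {x : ℝ} (hx : 0 ≤ x) (a : ℝ) {b : ℝ} (hb : 0 ≤ b) :
    ENNReal.ofReal (x ^ a) ^ b = ENNReal.ofReal (x ^ (a * b)) := by
  rw [ENNReal.ofReal_rpow_of_nonneg (Real.rpow_nonneg hx a) hb, Real.rpow_mul hx]

theorem lintegral_Ioc_sub_rpow {r : ℝ} (hr : -1 < r) (t : ℝ) {τ : ℝ} (hτ : 0 ≤ τ) :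
    ∫⁻ s in Ioc (t - τ) t, ENNReal.ofReal ((t - s) ^ r) =
      ENNReal.ofReal (τ ^ (r + 1) / (r + 1)) := by
  have hint : IntervalIntegrable (fun s => (t - s) ^ r) volume (t - τ) t := by
    simpa using
      ((intervalIntegral.intervalIntegrable_rpow' (a := 0) (b := τ) hr).comp_sub_left t).symm
  have hnonneg : 0 ≤ᵐ[volume.restrict (Ioc (t - τ) t)] fun s => (t - s) ^ r :=
    (ae_restrict_iff' measurableSet_Ioc).mpr <| .of_forall fun s hs =>
      Real.rpow_nonneg (sub_nonneg.mpr hs.2) r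
  have hval : ∫ s in (t - τ)..t, (t - s) ^ r = τ ^ (r + 1) / (r + 1) := by
    rw [intervalIntegral.integral_comp_sub_left (fun x => x ^ r) t, sub_self, sub_sub_cancel,
      integral_rpow (.inl hr), Real.zero_rpow (by linarith), sub_zero]
  rw [← hval, intervalIntegral.integral_of_le (by linarith),
    ofReal_integral_eq_lintegral_ofReal
      ((intervalIntegrable_iff_integrableOn_Ioc_of_le (by linarith)).mp hint) hnonneg]

theorem lintegral_Ioc_sub_rpow_neg_mul_le {α p q : ℝ} (hpq : p.HolderConjugate q)
    (hαp : α * p < 1) (t : ℝ) {τ : ℝ} (hτ : 0 ≤ τ) {g : ℝ → ENNReal}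
    (hg : AEMeasurable g (volume.restrict (Ioc (t - τ) t))) :
    ∫⁻ s in Ioc (t - τ) t, ENNReal.ofReal ((t - s) ^ (-α)) * g s ≤
      ENNReal.ofReal (τ ^ (1 - α * p) / (1 - α * p)) ^ (1 / p) *
        (∫⁻ s in Ioc (t - τ) t, g s ^ q) ^ (1 / q) := by
  have hkernel : ∫⁻ s in Ioc (t - τ) t, ENNReal.ofReal ((t - s) ^ (-α)) ^ p =
      ENNReal.ofReal (τ ^ (1 - α * p) / (1 - α * p)) := by
    rw [show 1 - α * p = -α * p + 1 by ring, ← lintegral_Ioc_sub_rpow (by linarith) t hτ]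
    refine setLIntegral_congr_fun measurableSet_Ioc fun s hs => ?_
    rw [ENNReal.ofReal_rpow_rpow (sub_nonneg.mpr hs.2) _ hpq.nonneg, neg_mul]
  calc ∫⁻ s in Ioc (t - τ) t, ENNReal.ofReal ((t - s) ^ (-α)) * g s
      ≤ (∫⁻ s in Ioc (t - τ) t, ENNReal.ofReal ((t - s) ^ (-α)) ^ p) ^ (1 / p) *
          (∫⁻ s in Ioc (t - τ) t, g s ^ q) ^ (1 / q) :=
        ENNReal.lintegral_mul_le_Lp_mul_Lq _ hpq (by fun_prop) hg
    _ = _ := by rw [hkernel]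

/-- Hölder-in-time estimate: for measurable `h ≥ 0`, `τ > 0` and `t ∈ ℝ`,
`∫_{t-τ}^{t} (t-s)^{-2/3} h(s)^{1/3} ds ≤ 4^{8/9} τ^{2/9} (∫_{t-τ}^{t} h(s)³ ds)^{1/9}`. -/
theorem holder_in_time_estimate (h : ℝ → ℝ) (hmeas : Measurable h)
    (h0 : ∀ s, 0 ≤ h s) (t τ : ℝ) (hτ : 0 < τ) :
    (∫⁻ s in Set.Ioc (t - τ) t,
        ENNReal.ofReal ((t - s) ^ (-(2 : ℝ) / 3) * h s ^ ((1 : ℝ) / 3))) ≤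
      ENNReal.ofReal ((4 : ℝ) ^ ((8 : ℝ) / 9) * τ ^ ((2 : ℝ) / 9)) *
        (∫⁻ s in Set.Ioc (t - τ) t, ENNReal.ofReal (h s ^ 3)) ^ ((1 : ℝ) / 9) := by
  have hpq : (9 / 8 : ℝ).HolderConjugate 9 := ⟨by norm_num, by norm_num, by norm_num⟩
  have hsplit : ∀ s ∈ Ioc (t - τ) t,
      ENNReal.ofReal ((t - s) ^ (-(2 : ℝ) / 3) * h s ^ ((1 : ℝ) / 3)) =
        ENNReal.ofReal ((t - s) ^ (-(2 / 3 : ℝ))) * ENNReal.ofReal (h s ^ ((1 : ℝ) / 3)) :=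
    fun s hs => by rw [neg_div, ENNReal.ofReal_mul (Real.rpow_nonneg (sub_nonneg.mpr hs.2) _)]
  have hcube : ∀ s, ENNReal.ofReal (h s ^ ((1 : ℝ) / 3)) ^ (9 : ℝ) = ENNReal.ofReal (h s ^ 3) :=
    fun s => by rw [ENNReal.ofReal_rpow_rpow (h0 s) _ (by norm_num)]; norm_num
  have hconst :
      ENNReal.ofReal (τ ^ (1 - 2 / 3 * (9 / 8) : ℝ) / (1 - 2 / 3 * (9 / 8))) ^ (1 / (9 / 8) : ℝ) =
      ENNReal.ofReal ((4 : ℝ) ^ ((8 : ℝ) / 9) * τ ^ ((2 : ℝ) / 9)) := by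
    rw [ENNReal.ofReal_rpow_of_nonneg (by positivity) (by norm_num)]
    norm_num
    rw [div_eq_mul_inv, mul_comm, Real.mul_rpow (by norm_num) (by positivity),
      ← Real.rpow_mul hτ.le]
    norm_num
  calc _ = ∫⁻ s in Ioc (t - τ) t,
        ENNReal.ofReal ((t - s) ^ (-(2 / 3 : ℝ))) * ENNReal.ofReal (h s ^ ((1 : ℝ) / 3)) :=
        setLIntegral_congr_fun measurableSet_Ioc hsplit
    _ ≤ _ := lintegral_Ioc_sub_rpow_neg_mul_le hpq (by norm_num) t hτ.le (by fun_prop)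
    _ = _ := by simp only [hcube, hconst]
end

section
/- Let R > 0, let a < b be real numbers, and let u : ℝ × ℝ⁴ → ℝ be twice continuously differentiable with u(t,x) = 0 whenever |x| ≥ R, and suppose u satisfies the quadratic Klein–Gordon equation ∂²_t u(t,x) = Δ_x u(t,x) − u(t,x) + u(t,x)² for all (t,x) ∈ (a,b) × ℝ⁴, where Δ_x is the Laplacian in x. Then the function y(t) = ∫_{ℝ⁴} u(t,x)² dx is twice differentiable on (a,b) and y''(t) = 2∫ (∂_t u(t,x))² dx − 2∫ |∇_x u(t,x)|² dx − 2∫ u(t,x)² dx + 2∫ u(t,x)³ dx. -/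
/-!
Since `u` and its time derivatives are continuous and supported in a fixed ball, they are
dominated near any time by a multiple of the indicator of that ball, so `y` can be differentiated
twice under the integral sign: `y' = 2∫ u ∂ₜu` and `y'' = 2∫ (∂ₜu)² + 2∫ u ∂ₜ²u`. Substituting the
equation for `∂ₜ²u` and integrating by parts once in each coordinate direction,
`∫ u Δu = -∫ |∇u|²`, gives the identity.
-/

open MeasureTheory

section

variable {E : Type*} [NormedAddCommGroup E]

theorem hasCompactSupport_of_eq_zero_of_norm_ge [ProperSpace E] {G : Type*} [Zero G]
    {f : E → G} {R : ℝ} (hf : ∀ x, R ≤ ‖x‖ → f x = 0) : HasCompactSupport f :=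
  HasCompactSupport.intro (isCompact_closedBall 0 R) fun x hx =>
    hf x (not_le.1 (by simpa using hx)).le

theorem Continuous.integrable_of_eq_zero_of_norm_ge [ProperSpace E] [MeasurableSpace E]
    [OpensMeasurableSpace E] {μ : Measure E} [IsFiniteMeasureOnCompacts μ] {G : Type*}
    [NormedAddCommGroup G] {f : E → G} {R : ℝ} (hf : Continuous f)
    (h0 : ∀ x, R ≤ ‖x‖ → f x = 0) : Integrable f μ :=
  hf.integrable_of_hasCompactSupport (hasCompactSupport_of_eq_zero_of_norm_ge h0)

theorem deriv_fst_eq_zero_of_norm_ge {G : Type*} [NormedAddCommGroup G] [NormedSpace ℝ G]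
    {F : ℝ × E → G} {R : ℝ}
    (hsupp : ∀ t x, R ≤ ‖x‖ → F (t, x) = 0) (t : ℝ) {x : E} (hx : R ≤ ‖x‖) :
    deriv (fun s => F (s, x)) t = 0 := by
  simp [show (fun s => F (s, x)) = 0 from funext fun s => hsupp s x hx]

variable [NormedSpace ℝ E] {G : Type*} [NormedAddCommGroup G] [NormedSpace ℝ G]

theorem contDiff_deriv_fst {F : ℝ × E → G} {m n : WithTop ℕ∞} (hF : ContDiff ℝ n F)
    (hmn : m + 1 ≤ n) : ContDiff ℝ m fun p : ℝ × E => deriv (fun s => F (s, p.2)) p.1 := by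
  have hdiff : Differentiable ℝ F := hF.differentiable (by rintro rfl; simp at hmn)
  have hderiv : ∀ p : ℝ × E, deriv (fun s => F (s, p.2)) p.1 = fderiv ℝ F p (1, 0) := fun p =>
    ((hdiff p).hasFDerivAt.comp_hasDerivAt p.1
      ((hasDerivAt_id p.1).prodMk (hasDerivAt_const p.1 p.2))).deriv
  simpa only [hderiv] using (hF.fderiv_right hmn).clm_apply contDiff_const

theorem hasDerivAt_deriv_fst {F : ℝ × E → G} (hF : Differentiable ℝ F) (t : ℝ) (x : E) :
    HasDerivAt (fun s => F (s, x)) (deriv (fun s => F (s, x)) t) t :=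
  (hF.comp (by fun_prop : Differentiable ℝ fun s : ℝ => (s, x)) t).hasDerivAt

theorem hasDerivAt_integral_of_contDiff [MeasurableSpace E] [BorelSpace E] [ProperSpace E]
    [CompleteSpace G] {μ : Measure E} [IsFiniteMeasureOnCompacts μ]
    {F : ℝ × E → G} {R : ℝ} (hF : ContDiff ℝ 1 F) (hsupp : ∀ t x, R ≤ ‖x‖ → F (t, x) = 0)
    (t₀ : ℝ) :
    HasDerivAt (fun t => ∫ x, F (t, x) ∂μ) (∫ x, deriv (fun s => F (s, x)) t₀ ∂μ) t₀ := by
  let F' : ℝ × E → G := fun p => deriv (fun s => F (s, p.2)) p.1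
  have hF' : Continuous F' := (contDiff_deriv_fst (m := 0) hF (by simp)).continuous
  obtain ⟨C, hC⟩ := ((isCompact_closedBall t₀ 1).prod (isCompact_closedBall (0 : E) R))
    |>.exists_bound_of_continuousOn hF'.continuousOn
  have hbound : ∀ x, ∀ t ∈ Metric.ball t₀ 1,
      ‖F' (t, x)‖ ≤ (Metric.closedBall (0 : E) R).indicator (fun _ => C) x := by
    intro x t ht
    by_cases hx : x ∈ Metric.closedBall (0 : E) R
    · simpa [hx] using hC (t, x) ⟨Metric.ball_subset_closedBall ht, hx⟩
    · have : R ≤ ‖x‖ := (not_le.1 (by simpa using hx)).le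
      simp [hx, F', deriv_fst_eq_zero_of_norm_ge hsupp t this]
  have hcont : ∀ t, Continuous fun x => F (t, x) := fun t => hF.continuous.comp (by fun_prop)
  refine (hasDerivAt_integral_of_dominated_loc_of_deriv_le (Metric.ball_mem_nhds t₀ one_pos)
    (.of_forall fun t => (hcont t).aestronglyMeasurable)
    ((hcont t₀).integrable_of_eq_zero_of_norm_ge (hsupp t₀))
    (hF'.comp (by fun_prop : Continuous fun x : E => (t₀, x))).aestronglyMeasurable
    (.of_forall hbound)
    ((integrableOn_const measure_closedBall_lt_top.ne).integrable_indicator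
      measurableSet_closedBall)
    (.of_forall fun x t _ => hasDerivAt_deriv_fst (hF.differentiable one_ne_zero) t x)).2

theorem ContDiff.continuous_fderiv_fderiv_apply {f : E → ℝ} (hf : ContDiff ℝ 2 f) (v w : E) :
    Continuous fun x => fderiv ℝ (fun y => fderiv ℝ f y v) x w :=
  (((hf.fderiv_right (m := 1) (by norm_num)).clm_apply contDiff_const).continuous_fderiv
    one_ne_zero).clm_apply continuous_const

theorem integral_mul_fderiv_fderiv_eq_neg [FiniteDimensional ℝ E] [MeasurableSpace E]
    [BorelSpace E] {μ : Measure E} [μ.IsAddHaarMeasure] {f : E → ℝ} (hf : ContDiff ℝ 2 f)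
    (hcs : HasCompactSupport f) (v : E) :
    ∫ x, f x * fderiv ℝ (fun y => fderiv ℝ f y v) x v ∂μ = -∫ x, fderiv ℝ f x v ^ 2 ∂μ := by
  have hf' : ContDiff ℝ 1 fun y => fderiv ℝ f y v :=
    (hf.fderiv_right (by norm_num)).clm_apply contDiff_const
  simp only [sq]
  refine integral_mul_fderiv_eq_neg_fderiv_mul_of_integrable ?_ ?_ ?_
    (fun x _ => hf.differentiable two_ne_zero x) (fun x _ => hf'.differentiable one_ne_zero x)
  · exact (hf'.continuous.mul hf'.continuous).integrable_of_hasCompactSupport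
      (hcs.fderiv_apply ℝ v).mul_right
  · exact (hf.continuous.mul (hf.continuous_fderiv_fderiv_apply v v))
      |>.integrable_of_hasCompactSupport hcs.mul_right
  · exact (hf.continuous.mul hf'.continuous).integrable_of_hasCompactSupport hcs.mul_right

end

section

variable {E : Type*} [NormedAddCommGroup E] [NormedSpace ℝ E] [MeasurableSpace E] [BorelSpace E]
  [ProperSpace E] {μ : Measure E} [IsFiniteMeasureOnCompacts μ] {u : ℝ → E → ℝ} {R : ℝ}

theorem hasDerivAt_integral_sq (hu : ContDiff ℝ 1 fun p : ℝ × E => u p.1 p.2)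
    (hsupp : ∀ t x, R ≤ ‖x‖ → u t x = 0) (t : ℝ) :
    HasDerivAt (fun s => ∫ x, u s x ^ 2 ∂μ) (∫ x, 2 * u t x * deriv (fun s => u s x) t ∂μ) t := by
  refine (hasDerivAt_integral_of_contDiff (R := R) (hu.pow 2) (fun s x hx => by simp [hsupp s x hx])
    t).congr_deriv ?_
  congr 1 with x
  dsimp only
  rw [((hasDerivAt_deriv_fst (hu.differentiable one_ne_zero) t x).fun_pow 2).deriv]
  ring

theorem hasDerivAt_integral_two_mul_deriv (hu : ContDiff ℝ 2 fun p : ℝ × E => u p.1 p.2)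
    (hsupp : ∀ t x, R ≤ ‖x‖ → u t x = 0) (t : ℝ) :
    HasDerivAt (fun s => ∫ x, 2 * u s x * deriv (fun s' => u s' x) s ∂μ)
      (∫ x, 2 * deriv (fun s => u s x) t ^ 2
        + 2 * (u t x * deriv (fun s => deriv (fun s' => u s' x) s) t) ∂μ) t := by
  have hut : ContDiff ℝ 1 fun p : ℝ × E => deriv (fun s => u s p.2) p.1 :=
    contDiff_deriv_fst hu (by norm_num)
  refine (hasDerivAt_integral_of_contDiff (R := R)
    ((contDiff_const.mul (hu.of_le one_le_two)).mul hut)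
    (fun s x hx => by simp [hsupp s x hx]) t).congr_deriv ?_
  congr 1 with x
  dsimp only
  rw [(((hasDerivAt_deriv_fst (hu.differentiable two_ne_zero) t x).const_mul 2).fun_mul
    (hasDerivAt_deriv_fst (hut.differentiable one_ne_zero) t x)).deriv]
  ring

end

section

variable {ι : Type*} [Fintype ι] [DecidableEq ι]

theorem EuclideanSpace.norm_sq_dual_eq_sum (f : EuclideanSpace ℝ ι →L[ℝ] ℝ) :
    ‖f‖ ^ 2 = ∑ i, f (EuclideanSpace.single i 1) ^ 2 := by
  set v := (InnerProductSpace.toDual ℝ (EuclideanSpace ℝ ι)).symm f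
  have hv : ∀ i, v i = f (EuclideanSpace.single i 1) := fun i => by
    rw [← InnerProductSpace.toDual_symm_apply, EuclideanSpace.inner_single_right]
    simp [v]
  rw [← LinearIsometryEquiv.norm_map (InnerProductSpace.toDual ℝ _).symm f,
    EuclideanSpace.norm_sq_eq]
  simp [v, hv]

/-- The Laplacian in the coordinate form of the Klein–Gordon equation; Mathlib's `Δ` is defined
intrinsically. -/
noncomputable def coordLaplacian (f : EuclideanSpace ℝ ι → ℝ) (x : EuclideanSpace ℝ ι) : ℝ :=
  ∑ i, fderiv ℝ (fun y => fderiv ℝ f y (EuclideanSpace.single i 1)) x (EuclideanSpace.single i 1)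

theorem ContDiff.continuous_coordLaplacian {f : EuclideanSpace ℝ ι → ℝ} (hf : ContDiff ℝ 2 f) :
    Continuous (coordLaplacian f) :=
  continuous_finsetSum _ fun _ _ => hf.continuous_fderiv_fderiv_apply _ _

theorem integral_mul_coordLaplacian_eq_neg {μ : Measure (EuclideanSpace ℝ ι)} [μ.IsAddHaarMeasure]
    {f : EuclideanSpace ℝ ι → ℝ} (hf : ContDiff ℝ 2 f) (hcs : HasCompactSupport f) :
    ∫ x, f x * coordLaplacian f x ∂μ = -∫ x, ‖fderiv ℝ f x‖ ^ 2 ∂μ := by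
  simp only [coordLaplacian, Finset.mul_sum, EuclideanSpace.norm_sq_dual_eq_sum]
  rw [integral_finsetSum, integral_finsetSum, ← Finset.sum_neg_distrib]
  · exact Finset.sum_congr rfl fun i _ => integral_mul_fderiv_fderiv_eq_neg hf hcs _
  · intro i _
    simp only [sq]
    have hfi := (hf.continuous_fderiv two_ne_zero).clm_apply
      (continuous_const (y := EuclideanSpace.single i (1 : ℝ)))
    exact (hfi.mul hfi).integrable_of_hasCompactSupport (hcs.fderiv_apply ℝ _).mul_right
  · exact fun i _ => (hf.continuous.mul (hf.continuous_fderiv_fderiv_apply _ _))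
      |>.integrable_of_hasCompactSupport hcs.mul_right

theorem integral_virial_integrand {μ : Measure (EuclideanSpace ℝ ι)} [μ.IsAddHaarMeasure]
    {f g : EuclideanSpace ℝ ι → ℝ} {R : ℝ} (hf : ContDiff ℝ 2 f) (hg : Continuous g)
    (hf0 : ∀ x, R ≤ ‖x‖ → f x = 0) (hg0 : ∀ x, R ≤ ‖x‖ → g x = 0) :
    ∫ x, 2 * g x ^ 2 + 2 * (f x * (coordLaplacian f x - f x + f x ^ 2)) ∂μ =
      2 * (∫ x, g x ^ 2 ∂μ) - 2 * (∫ x, ‖fderiv ℝ f x‖ ^ 2 ∂μ) - 2 * (∫ x, f x ^ 2 ∂μ)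
        + 2 * (∫ x, f x ^ 3 ∂μ) := by
  have hcf := hf.continuous
  have hcΔ := hf.continuous_coordLaplacian
  calc _ = ∫ x, 2 * g x ^ 2 + 2 * (f x * coordLaplacian f x) - 2 * f x ^ 2 + 2 * f x ^ 3 ∂μ := by
        congr 1 with x
        ring
    _ = 2 * (∫ x, g x ^ 2 ∂μ) + 2 * (∫ x, f x * coordLaplacian f x ∂μ)
          - 2 * (∫ x, f x ^ 2 ∂μ) + 2 * (∫ x, f x ^ 3 ∂μ) := by
        rw [integral_add, integral_sub, integral_add, integral_const_mul, integral_const_mul,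
          integral_const_mul, integral_const_mul]
        all_goals exact (Continuous.integrable_of_eq_zero_of_norm_ge (R := R) (by fun_prop)
          fun x hx => by simp [hf0 x hx, hg0 x hx])
    _ = _ := by
        rw [integral_mul_coordLaplacian_eq_neg hf (hasCompactSupport_of_eq_zero_of_norm_ge hf0)]
        ring

end

theorem virial_identity_general (R : ℝ) (a b : ℝ)
    (u : ℝ → EuclideanSpace ℝ (Fin 4) → ℝ)
    (hu : ContDiff ℝ 2 (fun p : ℝ × EuclideanSpace ℝ (Fin 4) => u p.1 p.2))
    (hsupp : ∀ t : ℝ, ∀ x : EuclideanSpace ℝ (Fin 4), R ≤ ‖x‖ → u t x = 0)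
    (heq : ∀ t ∈ Set.Ioo a b, ∀ x : EuclideanSpace ℝ (Fin 4),
      deriv (fun s => deriv (fun s' => u s' x) s) t =
        (∑ i : Fin 4, fderiv ℝ (fun y => fderiv ℝ (u t) y (EuclideanSpace.single i 1)) x
          (EuclideanSpace.single i 1)) - u t x + u t x ^ 2) :
    ∀ t ∈ Set.Ioo a b,
      DifferentiableAt ℝ (fun s => ∫ x, u s x ^ 2) t ∧
      DifferentiableAt ℝ (deriv (fun s => ∫ x, u s x ^ 2)) t ∧
      deriv (deriv (fun s => ∫ x, u s x ^ 2)) t =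
        2 * (∫ x, (deriv (fun s => u s x) t) ^ 2)
          - 2 * (∫ x, ‖fderiv ℝ (u t) x‖ ^ 2)
          - 2 * (∫ x, u t x ^ 2)
          + 2 * (∫ x, u t x ^ 3) := by
  intro t ht
  have hy' := hasDerivAt_integral_sq (μ := volume) (hu.of_le one_le_two) hsupp
  have hy'' := hasDerivAt_integral_two_mul_deriv (μ := volume) hu hsupp t
  have hy'_eq : deriv (fun s => ∫ x, u s x ^ 2) =
      fun s => ∫ x, 2 * u s x * deriv (fun s' => u s' x) s :=
    funext fun s => (hy' s).deriv
  refine ⟨(hy' t).differentiableAt, hy'_eq ▸ hy''.differentiableAt, ?_⟩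
  have hut : Continuous fun x => deriv (fun s => u s x) t :=
    (contDiff_deriv_fst (m := 0) hu (by norm_num)).continuous.comp
      (by fun_prop : Continuous fun x : EuclideanSpace ℝ (Fin 4) => (t, x))
  rw [hy'_eq, hy''.deriv]
  simp only [heq t ht]
  exact integral_virial_integrand (hu.comp (contDiff_const.prodMk contDiff_id)) hut (hsupp t)
    fun x => deriv_fst_eq_zero_of_norm_ge (F := fun p => u p.1 p.2) hsupp t

/-- Virial identity: if `u` is `C²` on `ℝ × ℝ⁴`, vanishes for `|x| ≥ R`, and solves the
quadratic Klein–Gordon equation `∂²ₜu = Δu - u + u²` on `(a,b) × ℝ⁴`, then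
`y(t) = ∫ u(t,x)² dx` is twice differentiable on `(a,b)` with
`y'' = 2∫(∂ₜu)² - 2∫|∇u|² - 2∫u² + 2∫u³`. -/
theorem virial_identity (R : ℝ) (hR : 0 < R) (a b : ℝ) (hab : a < b)
    (u : ℝ → EuclideanSpace ℝ (Fin 4) → ℝ)
    (hu : ContDiff ℝ 2 (fun p : ℝ × EuclideanSpace ℝ (Fin 4) => u p.1 p.2))
    (hsupp : ∀ t : ℝ, ∀ x : EuclideanSpace ℝ (Fin 4), R ≤ ‖x‖ → u t x = 0)
    (heq : ∀ t ∈ Set.Ioo a b, ∀ x : EuclideanSpace ℝ (Fin 4),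
      deriv (fun s => deriv (fun s' => u s' x) s) t =
        (∑ i : Fin 4, fderiv ℝ (fun y => fderiv ℝ (u t) y (EuclideanSpace.single i 1)) x
          (EuclideanSpace.single i 1)) - u t x + u t x ^ 2) :
    ∀ t ∈ Set.Ioo a b,
      DifferentiableAt ℝ (fun s => ∫ x, u s x ^ 2) t ∧
      DifferentiableAt ℝ (deriv (fun s => ∫ x, u s x ^ 2)) t ∧
      deriv (deriv (fun s => ∫ x, u s x ^ 2)) t =
        2 * (∫ x, (deriv (fun s => u s x) t) ^ 2)
          - 2 * (∫ x, ‖fderiv ℝ (u t) x‖ ^ 2)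
          - 2 * (∫ x, u t x ^ 2)
          + 2 * (∫ x, u t x ^ 3) :=
  virial_identity_general R a b u hu hsupp heq
end
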